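/- Let Ġ be a connected unbalanced signed graph of order n in which every triangle is balanced (𝒦₃⁻-free). Then e(Ġ) ≤ n(n-1)/2 - (n-2). -/
import Mathlib


/-- The product of the edge signs along a walk in a signed graph. -/
def walkSign {V : Type*} {G : SimpleGraph V} (σ : V → V → ℝ) {u v : V} (w : G.Walk u v) : ℝ :=
  (w.darts.map fun d => σ d.toProd.1 d.toProd.2).prod

/-- A signed graph is unbalanced if some cycle has edge-sign product `-1`. -/
def IsUnbalanced {V : Type*} (G : SimpleGraph V) (σ : V → V → ℝ) : Prop :=
  ∃ (v : V) (w : G.Walk v v), w.IsCycle ∧ walkSign σ w = -1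

/-- A signed graph is `𝒦₃⁻`-free if every triangle has positive sign. -/
def K3MinusFree {V : Type*} (G : SimpleGraph V) (σ : V → V → ℝ) : Prop :=
  ∀ a b c : V, G.Adj a b → G.Adj b c → G.Adj a c → σ a b * σ b c * σ c a = 1

private lemma sgn_solve3 {x p q : ℝ} (h : x * p * q = 1) (hp : p * p = 1) (hq : q * q = 1) :
    x = p * q := by
  have h1 : x * (p * p) * (q * q) = (x * p * q) * (p * q) := by ring
  rw [hp, hq, h] at h1
  simpa using h1

private lemma walkSign_nil' {V : Type*} {G : SimpleGraph V} (σ : V → V → ℝ) (u : V) :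
    walkSign σ (SimpleGraph.Walk.nil : G.Walk u u) = 1 := by simp [walkSign]

private lemma walkSign_cons' {V : Type*} {G : SimpleGraph V} (σ : V → V → ℝ) {u x v : V}
    (h : G.Adj u x) (p : G.Walk x v) :
    walkSign σ (SimpleGraph.Walk.cons h p) = σ u x * walkSign σ p := by
  simp [walkSign]

/-- A connected `𝒦₃⁻`-free unbalanced signed graph of order `n` has at most
`n(n-1)/2 - (n-2)` edges. -/
theorem K3MinusFree_unbalanced_edge_bound (n : ℕ)
    (G : SimpleGraph (Fin n)) [DecidableRel G.Adj] (σ : Fin n → Fin n → ℝ)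
    (hσsymm : ∀ u v, σ u v = σ v u)
    (hσsign : ∀ u v, G.Adj u v → σ u v = 1 ∨ σ u v = -1)
    (hconn : G.Connected)
    (hfree : K3MinusFree G σ) (hunbal : IsUnbalanced G σ) :
    (G.edgeFinset.card : ℝ) ≤ n * (n - 1) / 2 - (n - 2) := by
  classical
  obtain ⟨v0, w0, hcyc, hsgn⟩ := hunbal
  -- n ≥ 3
  have hn3 : 3 ≤ n := by
    have h1 : 3 ≤ w0.length := hcyc.three_le_length
    have h2 : w0.support.tail.length ≤ Fintype.card (Fin n) :=
      hcyc.support_nodup.length_le_card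
    have h3 : w0.support.length = w0.length + 1 := w0.length_support
    have h4 : w0.support.tail.length = w0.support.length - 1 := by
      simp [List.length_tail]
    simp only [Fintype.card_fin] at h2
    omega
  have sq : ∀ u v, G.Adj u v → σ u v * σ u v = 1 := by
    intro u v h
    rcases hσsign u v h with h' | h' <;> rw [h'] <;> norm_num
  have hadj : ∀ x y : Fin n, ¬ Gᶜ.Reachable x y → G.Adj x y := by
    intro x y h
    by_cases hxy : x = y
    · exact absurd (hxy ▸ SimpleGraph.Reachable.refl x) h
    · by_contra hA
      exact h (SimpleGraph.Adj.reachable ((SimpleGraph.compl_adj G x y).2 ⟨hxy, hA⟩))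
  -- trichotomy: no three vertices lie in pairwise distinct components of the complement
  have htri : ∀ a b c : Fin n, Gᶜ.Reachable a b ∨ Gᶜ.Reachable b c ∨ Gᶜ.Reachable a c := by
    intro a b c
    by_contra hcon
    push_neg at hcon
    obtain ⟨hab, hbc, hac⟩ := hcon
    set s : Fin n → ℝ := fun x => if Gᶜ.Reachable x b then σ x a * σ a b else σ x b with hs
    have hAab : G.Adj a b := hadj a b hab
    have hXa : ∀ x, Gᶜ.Reachable x b → G.Adj x a := by
      intro x hx
      exact hadj x a fun h => hab (h.symm.trans hx)
    have hXb : ∀ x, ¬ Gᶜ.Reachable x b → G.Adj x b := fun x hx => hadj x b hx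
    have hs2 : ∀ x, s x * s x = 1 := by
      intro x
      by_cases hx : Gᶜ.Reachable x b
      · have h1 := sq x a (hXa x hx)
        have h2 := sq a b hAab
        simp only [hs, if_pos hx]
        linear_combination (σ a b * σ a b) * h1 + h2
      · simpa [hs, if_neg hx] using sq x b (hXb x hx)
    have hmix : ∀ u v, G.Adj u v → ¬ Gᶜ.Reachable u b → Gᶜ.Reachable v b →
        σ u v = σ u b * (σ v a * σ a b) := by
      intro u v huv hub hvb
      have hva : G.Adj v a := hXa v hvb
      have hub' : G.Adj u b := hXb u hub
      by_cases hua : Gᶜ.Reachable u a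
      · have huc : G.Adj u c := hadj u c (fun h => hac (hua.symm.trans h))
        have hvc : G.Adj v c := hadj v c (fun h => hbc (hvb.symm.trans h))
        have hbc' : G.Adj b c := hadj b c hbc
        have hac' : G.Adj a c := hadj a c hac
        have t1 := hfree u v c huv hvc huc
        have t2 := hfree u c b huc hbc'.symm hub'
        have t3 := hfree v c a hvc hac'.symm hva
        have t4 := hfree a b c hAab hbc' hac'
        rw [hσsymm c u] at t1
        rw [hσsymm c b, hσsymm b u] at t2
        rw [hσsymm c a, hσsymm a v] at t3
        rw [hσsymm c a] at t4
        have e1 : σ u v = σ v c * σ u c := sgn_solve3 t1 (sq v c hvc) (sq u c huc)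
        have e2 : σ u c = σ b c * σ u b := sgn_solve3 t2 (sq b c hbc') (sq u b hub')
        have e3 : σ v c = σ a c * σ v a := sgn_solve3 t3 (sq a c hac') (sq v a hva)
        have e4 : σ a b = σ b c * σ a c := sgn_solve3 t4 (sq b c hbc') (sq a c hac')
        rw [e1, e3, e2, e4]; ring
      · have hua' : G.Adj u a := hadj u a hua
        have t1 := hfree u v a huv hva hua'
        have t2 := hfree u a b hua' hAab hub'
        rw [hσsymm a u] at t1
        rw [hσsymm b u] at t2
        have e1 : σ u v = σ v a * σ u a := sgn_solve3 t1 (sq v a hva) (sq u a hua')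
        have e2 : σ u a = σ a b * σ u b := sgn_solve3 t2 (sq a b hAab) (sq u b hub')
        rw [e1, e2]; ring
    have hkey : ∀ u v, G.Adj u v → σ u v = s u * s v := by
      intro u v huv
      by_cases hub : Gᶜ.Reachable u b <;> by_cases hvb : Gᶜ.Reachable v b
      · have hua := hXa u hub
        have hva := hXa v hvb
        have t1 := hfree u v a huv hva hua
        rw [hσsymm a u] at t1
        have e1 : σ u v = σ v a * σ u a := sgn_solve3 t1 (sq v a hva) (sq u a hua)
        have h2 := sq a b hAab
        simp only [hs, if_pos hub, if_pos hvb]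
        rw [e1]
        linear_combination (-(σ u a * σ v a)) * h2
      · have := hmix v u huv.symm hvb hub
        simp only [hs, if_pos hub, if_neg hvb]
        rw [hσsymm u v, this]; ring
      · simp only [hs, if_neg hub, if_pos hvb]
        exact hmix u v huv hub hvb
      · have t1 := hfree u v b huv (hXb v hvb) (hXb u hub)
        rw [hσsymm b u] at t1
        have e1 : σ u v = σ v b * σ u b := sgn_solve3 t1 (sq v b (hXb v hvb)) (sq u b (hXb u hub))
        simp only [hs, if_neg hub, if_neg hvb]
        rw [e1]; ring
    have hwalk : ∀ (x y : Fin n) (w : G.Walk x y), walkSign σ w = s x * s y := by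
      intro x y w
      induction w with
      | nil => rw [walkSign_nil']; exact (hs2 _).symm
      | cons h p ih =>
        rename_i u' x' v'
        rw [walkSign_cons', ih, hkey _ _ h]
        linear_combination (s u' * s v') * hs2 x'
    have hcontra := hwalk v0 v0 w0
    rw [hsgn] at hcontra
    have h2 := hs2 v0
    linarith
  -- counting: the complement has at most 2 components, hence at least n - 2 edges
  have hne : ∀ w : Fin n, (Finset.univ.filter (fun y => Gᶜ.Reachable w y)).Nonempty :=
    fun w => ⟨w, Finset.mem_filter.2 ⟨Finset.mem_univ w, SimpleGraph.Reachable.refl w⟩⟩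
  set r : Fin n → Fin n :=
    fun w => (Finset.univ.filter (fun y => Gᶜ.Reachable w y)).min' (hne w) with hr
  have hrReach : ∀ w, Gᶜ.Reachable w (r w) := by
    intro w
    have := Finset.min'_mem _ (hne w)
    exact (Finset.mem_filter.1 this).2
  have hrEq : ∀ w y, Gᶜ.Reachable w y → r w = r y := by
    intro w y hwy
    have h1 : r w ≤ r y := by
      apply Finset.min'_le
      exact Finset.mem_filter.2 ⟨Finset.mem_univ _, hwy.trans (hrReach y)⟩
    have h2 : r y ≤ r w := by
      apply Finset.min'_le
      exact Finset.mem_filter.2 ⟨Finset.mem_univ _, hwy.symm.trans (hrReach w)⟩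
    exact le_antisymm h1 h2
  set M : Finset (Fin n) := Finset.univ.filter (fun w => r w = w) with hM
  set N : Finset (Fin n) := Finset.univ.filter (fun w => ¬ r w = w) with hN
  have hMcard : M.card ≤ 2 := by
    by_contra h
    push_neg at h
    obtain ⟨x, y, z, hx, hy, hz, hxy, hxz, hyz⟩ := Finset.two_lt_card_iff.1 h
    have hx' := (Finset.mem_filter.1 hx).2
    have hy' := (Finset.mem_filter.1 hy).2
    have hz' := (Finset.mem_filter.1 hz).2
    rcases htri x y z with h' | h' | h'
    · exact hxy (by rw [← hx', ← hy', hrEq x y h'])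
    · exact hyz (by rw [← hy', ← hz', hrEq y z h'])
    · exact hxz (by rw [← hx', ← hz', hrEq x z h'])
  have hMN : M.card + N.card = n := by
    have := Finset.card_filter_add_card_filter_not
      (s := (Finset.univ : Finset (Fin n))) (fun w : Fin n => r w = w)
    simpa [hM, hN] using this
  -- injection from N into complement edges
  have hstep : ∀ w : Fin n, ∃ x, ¬ r w = w →
      (Gᶜ.Adj w x ∧ Gᶜ.dist x (r w) < Gᶜ.dist w (r w)) := by
    intro w
    by_cases hw : r w = w
    · exact ⟨w, fun h => absurd hw h⟩
    · obtain ⟨p, hp⟩ := (hrReach w).exists_walk_length_eq_dist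
      have hnil : ¬ p.Nil := SimpleGraph.Walk.not_nil_of_ne (fun h => hw h.symm)
      obtain ⟨x, hx, q, rfl⟩ := SimpleGraph.Walk.not_nil_iff.1 hnil
      refine ⟨x, fun _ => ⟨hx, ?_⟩⟩
      have h1 : Gᶜ.dist x (r w) ≤ q.length := SimpleGraph.dist_le q
      have h2 : q.length + 1 = Gᶜ.dist w (r w) := by simpa using hp
      omega
  choose f hf using hstep
  have hinjOn : Set.InjOn (fun w => s(w, f w)) ↑N := by
    intro w1 h1 w2 h2 he
    have hw1 : ¬ r w1 = w1 := (Finset.mem_filter.1 (Finset.mem_coe.1 h1)).2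
    have hw2 : ¬ r w2 = w2 := (Finset.mem_filter.1 (Finset.mem_coe.1 h2)).2
    obtain ⟨ha1, hd1⟩ := hf w1 hw1
    obtain ⟨ha2, hd2⟩ := hf w2 hw2
    simp only [Sym2.eq, Sym2.rel_iff', Prod.mk.injEq, Prod.swap_prod_mk] at he
    rcases he with ⟨h', _⟩ | ⟨e1, e2⟩
    · exact h'
    · exfalso
      subst e2
      have hm1 : r (f w1) = r w1 := (hrEq w1 (f w1) ha1.reachable).symm
      have q1 : Gᶜ.dist (f (f w1)) (r (f w1)) = Gᶜ.dist w1 (r w1) := by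
        rw [← e1, hm1]
      have q2 : Gᶜ.dist (f w1) (r (f w1)) = Gᶜ.dist (f w1) (r w1) := by rw [hm1]
      rw [q1, q2] at hd2
      omega
  have hmaps : ∀ w ∈ N, s(w, f w) ∈ Gᶜ.edgeFinset := by
    intro w hw
    have hw' : ¬ r w = w := (Finset.mem_filter.1 hw).2
    exact SimpleGraph.mem_edgeFinset.2 ((hf w hw').1)
  have hNcard : N.card ≤ Gᶜ.edgeFinset.card :=
    Finset.card_le_card_of_injOn _ hmaps hinjOn
  -- total count
  have hUnion : G.edgeFinset ∪ Gᶜ.edgeFinset = (⊤ : SimpleGraph (Fin n)).edgeFinset := by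
    ext e
    simp only [Finset.mem_union, SimpleGraph.mem_edgeFinset, ← Set.mem_union,
      ← SimpleGraph.edgeSet_sup]
    rw [sup_compl_eq_top]
  have hdisj : Disjoint G.edgeFinset Gᶜ.edgeFinset :=
    SimpleGraph.disjoint_edgeFinset.2 disjoint_compl_right
  have hsum : G.edgeFinset.card + Gᶜ.edgeFinset.card = n.choose 2 := by
    rw [← Finset.card_union_of_disjoint hdisj, hUnion,
      SimpleGraph.card_edgeFinset_top_eq_card_choose_two, Fintype.card_fin]
  have hfinal : G.edgeFinset.card + (n - 2) ≤ n.choose 2 := by omega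
  have hcast : ((n.choose 2 : ℕ) : ℝ) = n * (n - 1) / 2 := Nat.cast_choose_two (K := ℝ) n
  have h1 : ((G.edgeFinset.card : ℕ) : ℝ) + ((n - 2 : ℕ) : ℝ) ≤ ((n.choose 2 : ℕ) : ℝ) := by
    exact_mod_cast Nat.cast_le.2 hfinal
  have h2 : ((n - 2 : ℕ) : ℝ) = (n : ℝ) - 2 := by
    have : (2 : ℕ) ≤ n := by omega
    push_cast [Nat.cast_sub this]
    ring
  rw [h2, hcast] at h1
  linarith
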